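/- arXiv:2509.13041 — 2 statements merged into one kernel-verified Lean document; each statement's English description precedes it below -/
import Mathlib

section
/- Let β ∈ (0,1), a = β/(1−β), and let ν be a probability measure on ℝ with finite first moment that is β-biased around x, and suppose s(ν) := inf supp(ν) > −∞. Then S(ν) := sup supp(ν) ≤ x/β − s(ν)/a. -/
open MeasureTheory ProbabilityTheory Set

noncomputable section

/-- Topological support of a measure on `ℝ`: points all of whose neighborhoods have
positive measure. -/
def msupp (ν : Measure ℝ) : Set ℝ := {x : ℝ | ∀ ε > 0, 0 < ν (Metric.ball x ε)}

/-- `S(ν)`, the supremum of the support. -/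
def Ssup (ν : Measure ℝ) : ℝ := sSup (msupp ν)

/-- `s(ν)`, the infimum of the support. -/
def sinf (ν : Measure ℝ) : ℝ := sInf (msupp ν)

/-- Barycenter of a finite measure. -/
def barOf (ν : Measure ℝ) : ℝ := (∫ y, y ∂ν) / (ν Set.univ).toReal

/-- A probability measure centered at `0` is simple `β`-biased if its restriction to
`[0,∞)` is a single atom of mass at least `β`. -/
def IsSimpleBiased (β : ℝ) (ν : Measure ℝ) : Prop :=
  IsProbabilityMeasure ν ∧ Integrable id ν ∧ (∫ y, y ∂ν) = 0 ∧
  ∃ M : ℝ, 0 ≤ M ∧ ν.restrict (Set.Ici 0) = ν {M} • Measure.dirac M ∧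
    ENNReal.ofReal β ≤ ν {M}

/-- A probability measure centered at `0` is atomic `β`-biased if its support is bounded
above and it has an atom of mass at least `β` at the maximum of its support. -/
def IsAtomicBiased (β : ℝ) (ν : Measure ℝ) : Prop :=
  IsProbabilityMeasure ν ∧ Integrable id ν ∧ (∫ y, y ∂ν) = 0 ∧
  BddAbove (msupp ν) ∧ ENNReal.ofReal β ≤ ν {Ssup ν}

/-- `ν` is a mixture of measures satisfying `P`. -/
def IsMixtureOf (ν : Measure ℝ) (P : Measure ℝ → Prop) : Prop :=
  ∃ ρ : Measure ℝ, IsProbabilityMeasure ρ ∧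
    ∃ κ : ProbabilityTheory.Kernel ℝ ℝ, IsMarkovKernel κ ∧
      (∀ x : ℝ, P (κ x)) ∧ ν = ρ.bind (fun x => κ x)

/-- `β`-biased probability measure (centered at `0`). -/
def IsBiased (β : ℝ) (ν : Measure ℝ) : Prop := IsMixtureOf ν (IsAtomicBiased β)

/-- `β`-biased around `x`. -/
def IsBiasedAround (β x : ℝ) (ν : Measure ℝ) : Prop :=
  IsBiased β (ν.map (fun y => y - x))

/-- Strongly `β`-biased probability measure (centered at `0`). -/
def IsStronglyBiased (β : ℝ) (ν : Measure ℝ) : Prop :=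
  ∃ ρ : Measure ℝ, IsProbabilityMeasure ρ ∧
    ∃ κ : ProbabilityTheory.Kernel ℝ ℝ, IsMarkovKernel κ ∧
      ∃ γ : ℝ → ℝ, (∀ x : ℝ, β < γ x ∧ IsSimpleBiased (γ x) (κ x)) ∧
        ν = ρ.bind (fun x => κ x)

/-- Strongly `β`-biased around `x`. -/
def IsStronglyBiasedAround (β x : ℝ) (ν : Measure ℝ) : Prop :=
  IsStronglyBiased β (ν.map (fun y => y - x))

/-- Convex order between finite measures on `ℝ`. -/
def ConvexOrder (μ ν : Measure ℝ) : Prop :=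
  ∀ φ : ℝ → ℝ, ConvexOn ℝ Set.univ φ → Integrable φ μ → Integrable φ ν →
    ∫ y, φ y ∂μ ≤ ∫ y, φ y ∂ν

/-- The distorted reflection `R^β`. -/
def Rbeta (β : ℝ) : ℝ → ℝ := fun x =>
  if 0 ≤ x then -(β / (1 - β)) * x else -((1 - β) / β) * x

/-- The transform `Z^β`. -/
def Zbeta (β : ℝ) (f : ℝ → ℝ) : ℝ → ℝ := fun x =>
  if 0 < x then ((1 - β) / β) * f ((β / (1 - β)) * x) else f x

/-- The `β`-biased order `μ ≼_β ν`: existence of a kernel `κ` with `ν = μ.bind κ` such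
that `κ x` is `β`-biased around `x` for `μ`-a.e. `x`. -/
def BiasedOrder (β : ℝ) (μ ν : Measure ℝ) : Prop :=
  ∃ κ : ProbabilityTheory.Kernel ℝ ℝ, IsMarkovKernel κ ∧
    (∀ᵐ x ∂μ, IsBiasedAround β x (κ x)) ∧ ν = μ.bind (fun x => κ x)

/-- The strong `β`-biased order `μ ≼_{sβ} ν`. -/
def StrongBiasedOrder (β : ℝ) (μ ν : Measure ℝ) : Prop :=
  ∃ κ : ProbabilityTheory.Kernel ℝ ℝ, IsMarkovKernel κ ∧
    (∀ᵐ x ∂μ, IsStronglyBiasedAround β x (κ x)) ∧ ν = μ.bind (fun x => κ x)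

/-- The 1-Wasserstein distance between probability measures on `ℝ`. -/
def W1 (μ ν : Measure ℝ) : ℝ :=
  sInf {c : ℝ | ∃ π : Measure (ℝ × ℝ), IsProbabilityMeasure π ∧
    π.map Prod.fst = μ ∧ π.map Prod.snd = ν ∧
    Integrable (fun p => |p.1 - p.2|) π ∧ c = ∫ p, |p.1 - p.2| ∂π}

/-- `η` is a regular conditional law of `X` given the sub-σ-algebra `m₀`. -/
def IsCondLaw {Ω : Type*} [mΩ : MeasurableSpace Ω] (m₀ : MeasurableSpace Ω)
    (P : Measure Ω) (X : Ω → ℝ) (η : Ω → Measure ℝ) : Prop :=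
  (∀ ω, IsProbabilityMeasure (η ω)) ∧
  ∀ B : Set ℝ, MeasurableSet B →
    (fun ω => (η ω B).toReal) =ᵐ[P] P[(X ⁻¹' B).indicator (fun _ => (1 : ℝ))|m₀]

/-!
Every atomic `β`-biased piece has mean `0`, its mass above some `t`, and an atom of weight
`p ≥ β` at the top `M` of its support, so `β M + (1 - β) t ≤ p M + (1 - p) t ≤ 0`. This bound
`β y + (1 - β) t ≤ 0` holds almost surely under each piece, hence under the mixture; translating
back by `x` with `t = s(ν) - x` bounds the support of `ν` by `x / β - s(ν) (1 - β) / β`.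
-/

lemma msupp_eq_support (ν : Measure ℝ) : msupp ν = ν.support := by
  ext y
  exact Metric.nhds_basis_ball.mem_measureSupport.symm

lemma msupp_nonempty (ν : Measure ℝ) [NeZero ν] : (msupp ν).Nonempty :=
  msupp_eq_support ν ▸ Measure.nonempty_support (NeZero.ne ν)

lemma msupp_subset_of_ae {ν : Measure ℝ} {T : Set ℝ} (hT : IsClosed T) (h : ∀ᵐ y ∂ν, y ∈ T) :
    msupp ν ⊆ T :=
  msupp_eq_support ν ▸ Measure.support_subset_of_isClosed hT h

lemma ae_le_Ssup {ν : Measure ℝ} (h : BddAbove (msupp ν)) : ∀ᵐ y ∂ν, y ≤ Ssup ν := by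
  filter_upwards [msupp_eq_support ν ▸ Measure.support_mem_ae (μ := ν)] with y hy
  exact le_csSup h hy

lemma ae_sinf_le {ν : Measure ℝ} (h : BddBelow (msupp ν)) : ∀ᵐ y ∂ν, sinf ν ≤ y := by
  filter_upwards [msupp_eq_support ν ▸ Measure.support_mem_ae (μ := ν)] with y hy
  exact csInf_le h hy

lemma ae_bind_of_ae_ae {α β : Type*} [MeasurableSpace α] [MeasurableSpace β] {ρ : Measure α}
    (κ : Kernel α β) {p : β → Prop}
    (hp : MeasurableSet {y | p y}) (h : ∀ᵐ z ∂ρ, ∀ᵐ y ∂κ z, p y) :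
    ∀ᵐ y ∂ρ.bind (fun z => κ z), p y := by
  rw [ae_iff, ← compl_ofPred, Measure.bind_apply hp.compl κ.measurable.aemeasurable]
  exact lintegral_eq_zero_iff (κ.measurable_coe hp.compl) |>.2 (h.mono fun z hz => hz)

lemma atom_mul_add_le_integral {m : Measure ℝ} [IsProbabilityMeasure m] (hint : Integrable id m)
    {t : ℝ} (ht : ∀ᵐ y ∂m, t ≤ y) (M : ℝ) :
    m.real {M} * M + (1 - m.real {M}) * t ≤ ∫ y, y ∂m := by
  have hM : MeasurableSet {M} := measurableSet_singleton M
  rw [← integral_add_compl (f := fun y => y) hM hint, integral_singleton, smul_eq_mul,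
    ← probReal_compl_eq_one_sub hM]
  gcongr
  calc m.real {M}ᶜ * t = ∫ _ in {M}ᶜ, t ∂m := by rw [setIntegral_const, smul_eq_mul, mul_comm]
    _ ≤ ∫ y in {M}ᶜ, y ∂m :=
      integral_mono_ae (integrable_const t) hint.restrict (ae_restrict_of_ae ht)

lemma IsAtomicBiased.ae_le {β : ℝ} (hβ : 0 ≤ β) {m : Measure ℝ} (hm : IsAtomicBiased β m)
    {t : ℝ} (ht : ∀ᵐ y ∂m, t ≤ y) : ∀ᵐ y ∂m, β * y + (1 - β) * t ≤ 0 := by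
  obtain ⟨hprob, hint, hmean, hbdd, hatom⟩ := hm
  set M := Ssup m
  have hle : ∀ᵐ y ∂m, y ≤ M := ae_le_Ssup hbdd
  obtain ⟨y₀, hty₀, hy₀M⟩ := (ht.and hle).exists
  have htM : t ≤ M := hty₀.trans hy₀M
  have hβp : β ≤ m.real {M} := (ENNReal.ofReal_le_iff_le_toReal (measure_ne_top m _)).1 hatom
  have hmean_le := atom_mul_add_le_integral hint ht M
  rw [hmean] at hmean_le
  -- `β * M + (1 - β) * t ≤ p * M + (1 - p) * t` for `p = m {M} ≥ β`, because `t ≤ M`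
  have hM : β * M + (1 - β) * t ≤ 0 := by nlinarith
  filter_upwards [hle] with y hy
  nlinarith

lemma IsBiased.ae_le {β : ℝ} (hβ : 0 ≤ β) {μ : Measure ℝ} (hμ : IsBiased β μ)
    {t : ℝ} (ht : ∀ᵐ y ∂μ, t ≤ y) : ∀ᵐ y ∂μ, β * y + (1 - β) * t ≤ 0 := by
  obtain ⟨ρ, -, κ, -, hκ, rfl⟩ := hμ
  refine ae_bind_of_ae_ae κ (measurableSet_le (by fun_prop) measurable_const) ?_
  filter_upwards [Measure.ae_ae_of_ae_bind κ.measurable.aemeasurable ht] with z hz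
  exact (hκ z).ae_le hβ hz

lemma IsBiasedAround.ae_le {β x : ℝ} (hβ : 0 ≤ β) {ν : Measure ℝ} (hν : IsBiasedAround β x ν)
    {t : ℝ} (ht : ∀ᵐ y ∂ν, t ≤ y) : ∀ᵐ y ∂ν, β * y + (1 - β) * t ≤ x := by
  have hshift : Measurable fun y : ℝ => y - x := measurable_id.sub_const x
  have ht' : ∀ᵐ y ∂ν.map (fun y => y - x), t - x ≤ y := by
    rw [ae_map_iff hshift.aemeasurable measurableSet_Ici]
    filter_upwards [ht] with y hy
    linarith
  filter_upwards [ae_of_ae_map hshift.aemeasurable (IsBiased.ae_le hβ hν ht')] with y hy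
  linarith

theorem stmt7_general (β x : ℝ) (hβ : β ∈ Set.Ioo (0 : ℝ) 1) (ν : Measure ℝ)
    (hprob : IsProbabilityMeasure ν)
    (h : IsBiasedAround β x ν) (hbdd : BddBelow (msupp ν)) :
    BddAbove (msupp ν) ∧ Ssup ν ≤ x / β - sinf ν * ((1 - β) / β) := by
  have hβ₀ : 0 < β := hβ.1
  have hle := h.ae_le hβ₀.le (ae_sinf_le hbdd)
  have hsub : msupp ν ⊆ Iic (x / β - sinf ν * ((1 - β) / β)) := by
    refine msupp_subset_of_ae isClosed_Iic ?_
    filter_upwards [hle] with y hy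
    rw [mem_Iic, le_sub_iff_add_le, ← mul_div_assoc, add_div' _ _ _ hβ₀.ne',
      div_le_div_iff_of_pos_right hβ₀]
    linarith
  exact ⟨⟨_, hsub⟩, csSup_le (msupp_nonempty ν) hsub⟩

/-- if `ν` is `β`-biased around `x` and `s(ν) > -∞` then
`S(ν) ≤ x/β - s(ν)/a`. -/
theorem stmt7 (β x : ℝ) (hβ : β ∈ Set.Ioo (0 : ℝ) 1) (ν : Measure ℝ)
    (hprob : IsProbabilityMeasure ν) (hint : Integrable id ν)
    (h : IsBiasedAround β x ν) (hbdd : BddBelow (msupp ν)) :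
    BddAbove (msupp ν) ∧ Ssup ν ≤ x / β - sinf ν * ((1 - β) / β) :=
  stmt7_general β x hβ ν hprob h hbdd

end
end

section
/- Let β ∈ (0,1), g : ℝ → ℝ continuous with |g(y)| ≤ C(1+|y|), and define the β-envelope g_β(x) = inf{ ∫ g dρ : ρ ∈ 𝒫₁(ℝ), bar(ρ) = x, ρ({max supp(ρ)}) ≥ β }. Then g_β(x) = inf{ ∫ g dν : ν ∈ 𝒫₁(ℝ), ν is β-biased around x }. -/
/-!
A measure admissible for the envelope is, after centering at `x`, itself a (trivial) mixture of
atomic `β`-biased laws, so the envelope's set of values is contained in the `β`-biased one.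
Conversely, a measure `ν` that is `β`-biased around `x` is a mixture `∫ κ_u dμ(u)` whose components
are translates by `x` of atomic `β`-biased laws, i.e. admissible for the envelope; hence
`∫ g dν = ∫ (∫ g dκ_u) dμ(u)` is an average of values of the envelope's set and lies above each of
its lower bounds. Two sets of reals, one inside the other and with the same lower bounds, have the
same infimum (also under the junk convention `sInf = 0` when unbounded below).
-/

open MeasureTheory ProbabilityTheory Set

noncomputable section

theorem Real.sInf_eq_of_subset_of_lowerBounds_subset {s t : Set ℝ} (hs : s.Nonempty)
    (hst : s ⊆ t) (hlb : lowerBounds s ⊆ lowerBounds t) : sInf s = sInf t := by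
  by_cases hb : BddBelow s
  · have hinf : sInf s ∈ lowerBounds t := hlb (isGLB_csInf hs hb).1
    exact le_antisymm (le_csInf (hs.mono hst) hinf) (csInf_le_csInf ⟨_, hinf⟩ hs hst)
  · rw [Real.sInf_of_not_bddBelow hb, Real.sInf_of_not_bddBelow fun ht => hb (ht.mono hst)]

theorem csSup_preimage_add_const {α : Type*} [ConditionallyCompleteLattice α] [AddCommGroup α]
    [IsOrderedAddMonoid α] {s : Set α} (hs : s.Nonempty) (hb : BddAbove s) (c : α) :
    sSup ((· + c) ⁻¹' s) = sSup s - c := by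
  have h := (OrderIso.addRight (-c)).map_csSup' hs hb
  simp only [OrderIso.addRight_apply, ← sub_eq_add_neg] at h
  rw [h]
  congr 1
  ext y
  simp [sub_eq_iff_eq_add]

theorem integrable_of_abs_le_mul_one_add_abs {ν : Measure ℝ} [IsFiniteMeasure ν] {g : ℝ → ℝ}
    (hg : AEStronglyMeasurable g ν) {C : ℝ} (hgC : ∀ y, |g y| ≤ C * (1 + |y|))
    (hν : Integrable id ν) : Integrable g ν :=
  (((integrable_const 1).add hν.abs).const_mul C).mono' hg (ae_of_all _ hgC)

theorem le_integral_comp_of_ae_le {α β : Type*} {mα : MeasurableSpace α}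
    {mβ : MeasurableSpace β} {μ : Measure α} [IsProbabilityMeasure μ] {κ : Kernel α β}
    {f : β → ℝ} (hf : Integrable f (κ ∘ₘ μ)) {a : ℝ} (h : ∀ᵐ u ∂μ, a ≤ ∫ y, f y ∂κ u) :
    a ≤ ∫ y, f y ∂(κ ∘ₘ μ) := by
  rw [Measure.comp_eq_comp_const_apply] at hf ⊢
  rw [Kernel.integral_comp hf]
  simpa using integral_mono_ae (integrable_const a) hf.integral_comp h

theorem eq_comp_map_add_const_of_map_sub_const_eq_comp {α : Type*} {mα : MeasurableSpace α}
    {ν : Measure ℝ} {μ : Measure α} {κ : Kernel α ℝ} {x : ℝ} (h : ν.map (· - x) = κ ∘ₘ μ) :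
    ν = (κ.map (· + x)) ∘ₘ μ := by
  have hsub : Measurable fun y : ℝ => y - x := measurable_sub_const x
  have hadd : Measurable fun y : ℝ => y + x := measurable_add_const x
  rw [← Measure.map_comp _ _ hadd, ← h, Measure.map_map hadd hsub]
  simp [Function.comp_def]

theorem isMixtureOf_self {ν : Measure ℝ} [IsProbabilityMeasure ν] {P : Measure ℝ → Prop}
    (h : P ν) : IsMixtureOf ν P :=
  ⟨Measure.dirac 0, inferInstance, Kernel.const ℝ ν, inferInstance, fun _ => h,
    by rw [Measure.dirac_bind (Kernel.measurable _)]; rfl⟩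

theorem mem_msupp_of_measure_singleton_pos {ν : Measure ℝ} {a : ℝ} (h : 0 < ν {a}) :
    a ∈ msupp ν := fun _ hε =>
  h.trans_le (measure_mono (Set.singleton_subset_iff.2 (Metric.mem_ball_self hε)))

theorem msupp_dirac (a : ℝ) : msupp (Measure.dirac a) = {a} := by
  refine Set.Subset.antisymm (fun z hz => ?_) (Set.singleton_subset_iff.2 ?_)
  · by_contra hza
    have hmiss : a ∉ Metric.ball z (dist z a) := by simp [dist_comm]
    simpa [Measure.dirac_apply' _ Metric.isOpen_ball.measurableSet, hmiss] using
      hz _ (dist_pos.2 hza)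
  · exact mem_msupp_of_measure_singleton_pos (by simp)

theorem msupp_map_sub_const (ν : Measure ℝ) (x : ℝ) :
    msupp (ν.map (· - x)) = (· + x) ⁻¹' msupp ν := by
  have hball (z ε : ℝ) : (· - x) ⁻¹' Metric.ball z ε = Metric.ball (z + x) ε := by
    ext y; simp [Real.dist_eq]
  ext z
  simp [msupp, Measure.map_apply (measurable_sub_const x) Metric.isOpen_ball.measurableSet, hball]

theorem Ssup_map_sub_const {ν : Measure ℝ} (hne : (msupp ν).Nonempty)
    (hb : BddAbove (msupp ν)) (x : ℝ) : Ssup (ν.map (· - x)) = Ssup ν - x := by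
  rw [Ssup, msupp_map_sub_const, csSup_preimage_add_const hne hb, Ssup]

theorem ofReal_le_measure_Ssup_map_sub_const_iff {β : ℝ} (hβ : 0 < β) {ν : Measure ℝ}
    (hb : BddAbove (msupp ν)) (x : ℝ) :
    ENNReal.ofReal β ≤ ν.map (· - x) {Ssup (ν.map (· - x))} ↔
      ENNReal.ofReal β ≤ ν {Ssup ν} := by
  rcases (msupp ν).eq_empty_or_nonempty with hemp | hne
  · have hemp' : msupp (ν.map (· - x)) = ∅ := by rw [msupp_map_sub_const, hemp, preimage_empty]
    have hnot (μ : Measure ℝ) (hμ : msupp μ = ∅) : ¬ ENNReal.ofReal β ≤ μ {Ssup μ} := fun h => by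
      simpa [hμ] using mem_msupp_of_measure_singleton_pos ((ENNReal.ofReal_pos.2 hβ).trans_le h)
    exact iff_of_false (hnot _ hemp') (hnot _ hemp)
  · rw [Ssup_map_sub_const hne hb, Measure.map_apply (measurable_sub_const x)
      (measurableSet_singleton _)]
    rw [show (· - x) ⁻¹' {Ssup ν - x} = {Ssup ν} by ext; simp]

theorem isAtomicBiased_map_sub_const_iff {β : ℝ} (hβ : 0 < β) (ρ : Measure ℝ) (x : ℝ) :
    IsAtomicBiased β (ρ.map (· - x)) ↔ IsProbabilityMeasure ρ ∧ Integrable id ρ ∧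
      (∫ y, y ∂ρ) = x ∧ BddAbove (msupp ρ) ∧ ENNReal.ofReal β ≤ ρ {Ssup ρ} := by
  have hsub : Measurable fun y : ℝ => y - x := measurable_sub_const x
  rw [IsAtomicBiased, Measure.isProbabilityMeasure_map_iff hsub.aemeasurable]
  refine and_congr_right fun _ => ?_
  have hint : Integrable id (ρ.map (· - x)) ↔ Integrable id ρ := by
    rw [integrable_map_measure aestronglyMeasurable_id hsub.aemeasurable]
    simpa [Function.comp_def, sub_eq_add_neg] using
      integrable_add_const_iff (μ := ρ) (f := id) (c := -x)
  have hmean (h : Integrable id ρ) : (∫ y, y ∂(ρ.map (· - x))) = (∫ y, y ∂ρ) - x := by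
    rw [integral_map hsub.aemeasurable measurable_id'.aestronglyMeasurable,
      integral_sub (f := fun y => y) h (integrable_const x)]
    simp
  have hbdd : BddAbove (msupp (ρ.map (· - x))) ↔ BddAbove (msupp ρ) := by
    rw [msupp_map_sub_const]; exact (OrderIso.addRight x).bddAbove_preimage
  constructor
  · rintro ⟨h_int, h_mean, h_bdd, h_atom⟩
    have h_int := hint.1 h_int
    have h_bdd := hbdd.1 h_bdd
    exact ⟨h_int, by linarith [hmean h_int], h_bdd,
      (ofReal_le_measure_Ssup_map_sub_const_iff hβ h_bdd x).1 h_atom⟩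
  · rintro ⟨h_int, h_mean, h_bdd, h_atom⟩
    exact ⟨hint.2 h_int, by rw [hmean h_int, h_mean, sub_self], hbdd.2 h_bdd,
      (ofReal_le_measure_Ssup_map_sub_const_iff hβ h_bdd x).2 h_atom⟩

theorem isAtomicBiased_dirac_zero {β : ℝ} (hβ : β ≤ 1) : IsAtomicBiased β (Measure.dirac 0) := by
  refine ⟨inferInstance, ?_, by simp, by simp [msupp_dirac], ?_⟩
  · exact ⟨aestronglyMeasurable_id, by simp [HasFiniteIntegral, lintegral_dirac]⟩
  · simpa [Ssup, msupp_dirac] using hβ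

/-- the `β`-envelope of `g`, defined as the infimum of `∫ g dρ` over
probabilities `ρ` with barycenter `x` and an atom of mass `≥ β` at the maximum of
their support, equals the infimum of `∫ g dν` over `ν` that are `β`-biased around `x`. -/
theorem stmt19 (β x : ℝ) (hβ : β ∈ Set.Ioo (0 : ℝ) 1) (g : ℝ → ℝ)
    (hg : Continuous g) (C : ℝ) (hgC : ∀ y, |g y| ≤ C * (1 + |y|)) :
    sInf {r : ℝ | ∃ ρ : Measure ℝ, IsProbabilityMeasure ρ ∧ Integrable id ρ ∧
        (∫ y, y ∂ρ) = x ∧ BddAbove (msupp ρ) ∧ ENNReal.ofReal β ≤ ρ {Ssup ρ} ∧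
        r = ∫ y, g y ∂ρ} =
      sInf {r : ℝ | ∃ ν : Measure ℝ, IsProbabilityMeasure ν ∧ Integrable id ν ∧
        IsBiasedAround β x ν ∧ r = ∫ y, g y ∂ν} := by
  obtain ⟨hβ0, hβ1⟩ := hβ
  set L := {r : ℝ | ∃ ρ : Measure ℝ, IsProbabilityMeasure ρ ∧ Integrable id ρ ∧
    (∫ y, y ∂ρ) = x ∧ BddAbove (msupp ρ) ∧ ENNReal.ofReal β ≤ ρ {Ssup ρ} ∧ r = ∫ y, g y ∂ρ}
  have mem_L (ρ : Measure ℝ) (h : IsAtomicBiased β (ρ.map (· - x))) : (∫ y, g y ∂ρ) ∈ L := by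
    obtain ⟨hρ, h_int, h_mean, h_bdd, h_atom⟩ := (isAtomicBiased_map_sub_const_iff hβ0 ρ x).1 h
    exact ⟨ρ, hρ, h_int, h_mean, h_bdd, h_atom, rfl⟩
  refine Real.sInf_eq_of_subset_of_lowerBounds_subset ⟨_, mem_L (Measure.dirac x) ?_⟩ ?_ ?_
  · simpa using isAtomicBiased_dirac_zero hβ1.le
  · rintro r ⟨ρ, hρ, h_int, h_mean, h_bdd, h_atom, rfl⟩
    have h_atomic := (isAtomicBiased_map_sub_const_iff hβ0 ρ x).2
      ⟨hρ, h_int, h_mean, h_bdd, h_atom⟩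
    have := h_atomic.1
    exact ⟨ρ, hρ, h_int, isMixtureOf_self h_atomic, rfl⟩
  · rintro a ha r ⟨ν, -, h_int, ⟨μ, hμ, κ, hκ, h_atomic, h_mix⟩, rfl⟩
    rw [eq_comp_map_add_const_of_map_sub_const_eq_comp h_mix] at h_int ⊢
    refine le_integral_comp_of_ae_le
      (integrable_of_abs_le_mul_one_add_abs hg.aestronglyMeasurable hgC h_int)
      (ae_of_all _ fun u => ha (mem_L _ ?_))
    rw [Kernel.map_apply _ (measurable_add_const x),
      Measure.map_map (measurable_sub_const x) (measurable_add_const x)]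
    simpa [Function.comp_def] using h_atomic u

end
end
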